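/- With the same hypotheses as in the index-positive case, except assuming instead that H_*^{S^1}(B) is index-negative (there is N with H_i^{S^1}(B)=0 for all i>N), the mean Euler characteristic χ_m(H_*^{S^1}(B)) exists and equals -χ(H_*(B))/2. -/

import Mathlib

/-!
Write `s i = dim H_i^{S¹}(B)` and `G i = (-1)^i (rank β_i - s (i-1))`. Rank–nullity along the Gysin
sequence gives `(-1)^j dim H_j(B) = G (j+1) - G j`, so `χ(H_*(B))` telescopes to
`G(+∞) - G(-∞)`. Index-negativity makes `G` vanish in high degrees; below the support of `H_*(B)`,
`G` is constant, say `d`, and `α` is zero, so `G i = (-1)^(i-1) s (i-1) + (-1)^i s i`. Hence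
`χ(H_*(B)) = -d`, and widening the window `[-N, N]` by one on each side eventually adds exactly one
such pair, so the alternating sum over `[-N, N]` grows like `N d / 2`.
-/

open Filter Finset Topology Module LinearMap

theorem sum_Icc_neg_succ_succ {M : Type*} [AddCommMonoid M] (f : ℤ → M) (N : ℕ) :
    ∑ i ∈ Icc (-((N + 1 : ℕ) : ℤ)) ((N + 1 : ℕ) : ℤ), f i =
      ∑ i ∈ Icc (-(N : ℤ)) N, f i + f (-(N : ℤ) - 1) + f ((N : ℤ) + 1) := by
  have hsplit : Icc (-((N + 1 : ℕ) : ℤ)) ((N + 1 : ℕ) : ℤ) =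
      insert (-(N : ℤ) - 1) (insert ((N : ℤ) + 1) (Icc (-(N : ℤ)) N)) := by
    ext i; simp only [mem_Icc, mem_insert]; omega
  rw [hsplit, sum_insert (by simp only [mem_Icc, mem_insert]; omega),
    sum_insert (by simp only [mem_Icc]; omega)]
  abel

theorem sum_Icc_neg_sub_telescope {M : Type*} [AddCommGroup M] (G : ℤ → M) (N : ℕ) :
    ∑ j ∈ Icc (-(N : ℤ)) N, (G (j + 1) - G j) = G (N + 1) - G (-N) := by
  induction N with
  | zero => simp
  | succ N ih =>
    rw [sum_Icc_neg_succ_succ, ih, sub_add_cancel]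
    push_cast
    abel_nf

theorem tendsto_div_of_add_two_eq_add {g : ℕ → ℝ} {d : ℝ} {K : ℕ}
    (hg : ∀ N ≥ K, g (N + 2) = g N + d) : Tendsto (fun N : ℕ => g N / N) atTop (𝓝 (d / 2)) := by
  set h : ℕ → ℝ := fun N => g N - N * (d / 2) with hh
  have hper : Function.Periodic (fun m => h (K + m)) 2 := by
    intro m
    simp only [hh, ← add_assoc, hg _ (Nat.le_add_right K m)]
    push_cast
    ring
  have hbound : ∀ N ≥ K, ‖h N‖ ≤ |h K| + |h (K + 1)| := by
    intro N hN
    obtain ⟨m, rfl⟩ := Nat.exists_eq_add_of_le hN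
    rw [← hper.map_mod_nat m, Real.norm_eq_abs]
    rcases Nat.mod_two_eq_zero_or_one m with h0 | h1
    · simp only [h0, add_zero]; linarith [abs_nonneg (h (K + 1))]
    · simp only [h1]; linarith [abs_nonneg (h K)]
  have hsmall : Tendsto (fun N : ℕ => h N / N) atTop (𝓝 0) := by
    refine squeeze_zero_norm' ?_ (tendsto_const_div_atTop_nhds_zero_nat (|h K| + |h (K + 1)|))
    filter_upwards [eventually_ge_atTop K] with N hN
    rw [norm_div, RCLike.norm_natCast]
    gcongr
    exact hbound N hN
  have hlim : Tendsto (fun N : ℕ => d / 2 + h N / N) atTop (𝓝 (d / 2)) := by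
    simpa using hsmall.const_add (d / 2)
  refine hlim.congr' ?_
  filter_upwards [eventually_ge_atTop 1] with N hN
  have : (N : ℝ) ≠ 0 := Nat.cast_ne_zero.mpr (by omega)
  field_simp
  simp only [hh]
  ring

theorem tendsto_sum_Icc_div_of_add_eq {f : ℤ → ℝ} {d : ℝ} {M N₁ : ℤ}
    (hzero : ∀ i > N₁, f i = 0) (hpair : ∀ i ≤ M, f (i - 1) + f i = d) :
    Tendsto (fun N : ℕ => (∑ i ∈ Icc (-(N : ℤ)) N, f i) / N) atTop (𝓝 (d / 2)) := by
  refine tendsto_div_of_add_two_eq_add (K := N₁.toNat + (-M).toNat) fun N hN => ?_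
  rw [show N + 2 = N + 1 + 1 from rfl, sum_Icc_neg_succ_succ, sum_Icc_neg_succ_succ]
  have hN₁ := N₁.self_le_toNat
  have hM := (-M).self_le_toNat
  push_cast
  rw [hzero (N + 1) (by omega), hzero (N + 1 + 1) (by omega),
    show -((N : ℤ) + 1) - 1 = -(N : ℤ) - 1 - 1 by ring, ← hpair (-(N : ℤ) - 1) (by omega)]
  ring

theorem Function.Exact.finrank_eq_finrank_range_add_finrank_range {K M N P : Type*} [DivisionRing K]
    [AddCommGroup M] [Module K M] [AddCommGroup N] [Module K N] [AddCommGroup P] [Module K P]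
    [FiniteDimensional K N] {f : M →ₗ[K] N} {g : N →ₗ[K] P} (h : Function.Exact f g) :
    finrank K N = finrank K (range f) + finrank K (range g) := by
  rw [← g.finrank_range_add_finrank_ker, exact_iff.mp h, add_comm]

section Gysin

variable {K : Type*} [Field K] {HB HS : ℤ → Type*} [∀ i, AddCommGroup (HB i)] [∀ i, Module K (HB i)]
  [∀ i, AddCommGroup (HS i)] [∀ i, Module K (HS i)]
  [∀ i, FiniteDimensional K (HB i)] [∀ i, FiniteDimensional K (HS i)]
  {α : ∀ i : ℤ, HB i →ₗ[K] HS i} {β : ∀ i : ℤ, HS i →ₗ[K] HS (i - 2)}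
  {γ : ∀ i : ℤ, HS (i - 2) →ₗ[K] HB (i - 1)}

variable (β) in
noncomputable def gysinPrimitive (i : ℤ) : ℝ :=
  (-1) ^ i * ((finrank K (range (β i)) : ℝ) - finrank K (HS (i - 1)))

theorem neg_one_zpow_mul_finrank_eq_gysinPrimitive_sub
    (hαβ : ∀ i, Function.Exact (α i) (β i)) (hβγ : ∀ i, Function.Exact (β i) (γ i))
    (hγα : ∀ i, Function.Exact (γ i) (α (i - 1))) (j : ℤ) :
    (-1 : ℝ) ^ j * finrank K (HB j) = gysinPrimitive β (j + 1) - gysinPrimitive β j := by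
  have hS := (hαβ j).finrank_eq_finrank_range_add_finrank_range
  have hS' := (hβγ (j + 1)).finrank_eq_finrank_range_add_finrank_range
  have hB := (hγα (j + 1)).finrank_eq_finrank_range_add_finrank_range
  have e₁ : finrank K (HS (j + 1 - 2)) = finrank K (HS (j - 1)) := by
    rw [show j + 1 - 2 = j - 1 by ring]
  have e₂ : finrank K (HB (j + 1 - 1)) = finrank K (HB j) := by rw [add_sub_cancel_right]
  have e₃ : finrank K (HS (j + 1 - 1)) = finrank K (HS j) := by rw [add_sub_cancel_right]
  have e₄ : finrank K (range (α (j + 1 - 1))) = finrank K (range (α j)) := by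
    rw [add_sub_cancel_right]
  have hsign : (-1 : ℝ) ^ (j + 1) = -(-1) ^ j := by rw [zpow_add_one₀ (by norm_num)]; ring
  rw [e₁] at hS'
  rw [e₂, e₄] at hB
  rw [gysinPrimitive, gysinPrimitive, hsign, e₃, hB, hS, hS']
  push_cast
  ring

theorem gysinPrimitive_eq_of_subsingleton (hαβ : ∀ i, Function.Exact (α i) (β i)) (i : ℤ)
    [Subsingleton (HB i)] :
    (-1 : ℝ) ^ (i - 1) * finrank K (HS (i - 1)) + (-1) ^ i * finrank K (HS i) =
      gysinPrimitive β i := by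
  have hS := (hαβ i).finrank_eq_finrank_range_add_finrank_range
  have hα : finrank K (range (α i)) = 0 :=
    Nat.eq_zero_of_le_zero ((α i).finrank_range_le.trans_eq finrank_zero_of_subsingleton)
  rw [gysinPrimitive, hS, hα, zpow_sub_one₀ (by norm_num)]
  push_cast
  ring

theorem gysinPrimitive_eq_zero (i : ℤ) [Subsingleton (HS i)] [Subsingleton (HS (i - 1))] :
    gysinPrimitive β i = 0 := by
  have hβ : finrank K (range (β i)) = 0 :=
    Nat.eq_zero_of_le_zero ((β i).finrank_range_le.trans_eq finrank_zero_of_subsingleton)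
  simp [gysinPrimitive, hβ, finrank_zero_of_subsingleton]

theorem gysinPrimitive_eq_of_le (hαβ : ∀ i, Function.Exact (α i) (β i))
    (hβγ : ∀ i, Function.Exact (β i) (γ i)) (hγα : ∀ i, Function.Exact (γ i) (α (i - 1)))
    {m : ℤ} (hB : ∀ i < m, Subsingleton (HB i)) :
    ∀ i ≤ m, gysinPrimitive β i = gysinPrimitive β m := by
  intro i hi
  induction i, hi using Int.leInductionDown with
  | base => rfl
  | pred i hi ih =>
    have hstep := neg_one_zpow_mul_finrank_eq_gysinPrimitive_sub hαβ hβγ hγα (i - 1)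
    have := hB (i - 1) (by omega)
    rw [finrank_zero_of_subsingleton, sub_add_cancel] at hstep
    push_cast at hstep
    linarith

theorem sum_neg_one_zpow_mul_finrank_eq_neg_gysinPrimitive
    (hαβ : ∀ i, Function.Exact (α i) (β i)) (hβγ : ∀ i, Function.Exact (β i) (γ i))
    (hγα : ∀ i, Function.Exact (γ i) (α (i - 1)))
    (N₀ : ℕ) (hvanish : ∀ i : ℤ, (N₀ : ℤ) < |i| → Subsingleton (HB i))
    (N₁ : ℤ) (hidxneg : ∀ i > N₁, Subsingleton (HS i)) :
    ∑ j ∈ Icc (-(N₀ : ℤ)) N₀, (-1 : ℝ) ^ j * finrank K (HB j) =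
      -gysinPrimitive β (-N₀) := by
  set N := N₀ + N₁.toNat + 1
  have hN₁ := N₁.self_le_toNat
  calc ∑ j ∈ Icc (-(N₀ : ℤ)) N₀, (-1 : ℝ) ^ j * finrank K (HB j)
      = ∑ j ∈ Icc (-(N : ℤ)) N, (-1 : ℝ) ^ j * finrank K (HB j) := by
        refine sum_subset (Icc_subset_Icc (by omega) (by omega)) fun j hj hj₀ => ?_
        simp only [mem_Icc, not_and_or, not_le] at hj hj₀
        have := hvanish j (lt_abs.mpr (by omega))
        simp [finrank_zero_of_subsingleton]
    _ = ∑ j ∈ Icc (-(N : ℤ)) N, (gysinPrimitive β (j + 1) - gysinPrimitive β j) :=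
        sum_congr rfl fun j _ => neg_one_zpow_mul_finrank_eq_gysinPrimitive_sub hαβ hβγ hγα j
    _ = gysinPrimitive β (N + 1) - gysinPrimitive β (-N) := sum_Icc_neg_sub_telescope _ N
    _ = -gysinPrimitive β (-N₀) := by
        have := hidxneg (N + 1) (by omega)
        have := hidxneg (N + 1 - 1) (by omega)
        rw [gysinPrimitive_eq_zero, gysinPrimitive_eq_of_le hαβ hβγ hγα (m := -N₀)
          (fun i hi => hvanish i (lt_abs.mpr (by omega))) (-(N : ℤ)) (by omega), zero_sub]

end Gysin

theorem stmt1_general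
    (HB HS : ℤ → Type) [∀ i, AddCommGroup (HB i)] [∀ i, Module ℚ (HB i)]
    [∀ i, AddCommGroup (HS i)] [∀ i, Module ℚ (HS i)]
    [∀ i, FiniteDimensional ℚ (HB i)] [∀ i, FiniteDimensional ℚ (HS i)]
    (α : ∀ i : ℤ, HB i →ₗ[ℚ] HS i)
    (β : ∀ i : ℤ, HS i →ₗ[ℚ] HS (i - 2))
    (γ : ∀ i : ℤ, HS (i - 2) →ₗ[ℚ] HB (i - 1))
    (hαβ : ∀ i, Function.Exact (α i) (β i))
    (hβγ : ∀ i, Function.Exact (β i) (γ i))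
    (hγα : ∀ i, Function.Exact (γ i) (α (i - 1)))
    (N₀ : ℕ) (hvanish : ∀ i : ℤ, (N₀ : ℤ) < |i| → Subsingleton (HB i))
    (N₁ : ℤ) (hidxneg : ∀ i > N₁, Subsingleton (HS i)) :
    Tendsto
      (fun N : ℕ =>
        (1 / (N : ℝ)) *
          ∑ i ∈ Finset.Icc (-(N : ℤ)) (N : ℤ), (-1 : ℝ) ^ i * (Module.finrank ℚ (HS i) : ℝ))
      atTop
      (𝓝 (-(∑ i ∈ Finset.Icc (-(N₀ : ℤ)) (N₀ : ℤ),
            (-1 : ℝ) ^ i * (Module.finrank ℚ (HB i) : ℝ)) / 2)) := by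
  have hB : ∀ i < -(N₀ : ℤ), Subsingleton (HB i) := fun i hi => hvanish i (lt_abs.mpr (by omega))
  have hzero : ∀ i > N₁, (-1 : ℝ) ^ i * finrank ℚ (HS i) = 0 := fun i hi => by
    have := hidxneg i hi
    simp [finrank_zero_of_subsingleton]
  have hpair : ∀ i ≤ -(N₀ : ℤ) - 1, (-1 : ℝ) ^ (i - 1) * finrank ℚ (HS (i - 1)) +
      (-1) ^ i * finrank ℚ (HS i) = gysinPrimitive β (-N₀) := fun i hi => by
    have := hB i (by omega)
    rw [gysinPrimitive_eq_of_subsingleton hαβ, gysinPrimitive_eq_of_le hαβ hβγ hγα hB i (by omega)]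
  rw [sum_neg_one_zpow_mul_finrank_eq_neg_gysinPrimitive hαβ hβγ hγα N₀ hvanish N₁ hidxneg, neg_neg]
  simpa only [one_div_mul_eq_div] using tendsto_sum_Icc_div_of_add_eq hzero hpair

/-- Mean Euler characteristic from a Gysin-type long exact sequence, index-negative case. -/
theorem stmt1
    (HB HS : ℤ → Type) [∀ i, AddCommGroup (HB i)] [∀ i, Module ℚ (HB i)]
    [∀ i, AddCommGroup (HS i)] [∀ i, Module ℚ (HS i)]
    [∀ i, FiniteDimensional ℚ (HB i)] [∀ i, FiniteDimensional ℚ (HS i)]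
    (α : ∀ i : ℤ, HB i →ₗ[ℚ] HS i)
    (β : ∀ i : ℤ, HS i →ₗ[ℚ] HS (i - 2))
    (γ : ∀ i : ℤ, HS (i - 2) →ₗ[ℚ] HB (i - 1))
    (hαβ : ∀ i, Function.Exact (α i) (β i))
    (hβγ : ∀ i, Function.Exact (β i) (γ i))
    (hγα : ∀ i, Function.Exact (γ i) (α (i - 1)))
    (N₀ : ℕ) (hvanish : ∀ i : ℤ, (N₀ : ℤ) < |i| → Subsingleton (HB i))
    (C : ℕ) (hbound : ∀ i, Module.finrank ℚ (HS i) < C)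
    (N₁ : ℤ) (hidxneg : ∀ i > N₁, Subsingleton (HS i)) :
    Tendsto
      (fun N : ℕ =>
        (1 / (N : ℝ)) *
          ∑ i ∈ Finset.Icc (-(N : ℤ)) (N : ℤ), (-1 : ℝ) ^ i * (Module.finrank ℚ (HS i) : ℝ))
      atTop
      (𝓝 (-(∑ i ∈ Finset.Icc (-(N₀ : ℤ)) (N₀ : ℤ),
            (-1 : ℝ) ^ i * (Module.finrank ℚ (HB i) : ℝ)) / 2)) :=
  stmt1_general HB HS α β γ hαβ hβγ hγα N₀ hvanish N₁ hidxneg
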